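/- Suppose A belongs to the class 𝒜 and Φ satisfies condition δ2. Then for any sequence (x̄^{(l)})_{l≥1} in l_Φ^A(X), one has ‖x̄^{(l)}‖_Φ^A → 0 as l → ∞ if and only if ρ_Φ^A(x̄^{(l)}) → 0 as l → ∞. -/

import Mathlib

open Filter Topology

/-- An Orlicz function: convex, nondecreasing, continuous on `[0,∞)`,
vanishing at `0`, positive on `(0,∞)`, tending to `∞` at `∞`. -/
structure IsOrliczFn (φ : ℝ → ℝ) : Prop where
  convexOn : ConvexOn ℝ (Set.Ici (0 : ℝ)) φ
  monotoneOn : MonotoneOn φ (Set.Ici (0 : ℝ))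
  continuousOn : ContinuousOn φ (Set.Ici (0 : ℝ))
  map_zero : φ 0 = 0
  pos : ∀ t : ℝ, 0 < t → 0 < φ t
  tendsto_atTop : Filter.Tendsto φ Filter.atTop Filter.atTop

/-- A Musielak-Orlicz function: a sequence of Orlicz functions. -/
def IsMusielakOrlicz (Φ : ℕ → ℝ → ℝ) : Prop := ∀ n, IsOrliczFn (Φ n)

/-- Condition δ₂ for a Musielak-Orlicz function. -/
def MOCondDelta2 (Φ : ℕ → ℝ → ℝ) : Prop :=
  ∃ K > (0 : ℝ), ∃ δ > (0 : ℝ), ∃ c : ℕ → ℝ, (∀ n, 0 ≤ c n) ∧ Summable c ∧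
    ∀ n : ℕ, ∀ x : ℝ, 0 ≤ x → Φ n x ≤ δ → Φ n (2 * x) ≤ K * Φ n x + c n

/-- Condition (*) for a Musielak-Orlicz function. -/
def MOCondStar (Φ : ℕ → ℝ → ℝ) : Prop :=
  ∀ ε : ℝ, ε ∈ Set.Ioo (0 : ℝ) 1 → ∃ δ > (0 : ℝ), ∀ n : ℕ, ∀ u : ℝ, 0 ≤ u →
    Φ n u < 1 - ε → Φ n ((1 + δ) * u) ≤ 1

/-- The class 𝒜 of infinite matrices: every column is nonzero. -/
def MatrixClassA (a : ℕ → ℕ → ℝ) : Prop := ∀ k, ∃ n, a n k ≠ 0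

/-- A triangle matrix: nonzero diagonal, zero above the diagonal. -/
def IsTriangle (a : ℕ → ℕ → ℝ) : Prop := (∀ n, a n n ≠ 0) ∧ ∀ n k, n < k → a n k = 0

/-- The `n`-th row sum `∑_k |a_{nk}| ‖x_k‖`. -/
noncomputable def rowSum {X : Type*} [NormedAddCommGroup X]
    (a : ℕ → ℕ → ℝ) (x : ℕ → X) (n : ℕ) : ℝ :=
  ∑' k, |a n k| * ‖x k‖

/-- Membership in the generalized Musielak-Orlicz sequence space `l_Φ^A(X)`:
`x` is a bounded sequence whose row sums are finite and
`∑_n φ_n(rowSum_n / σ) < ∞` for some `σ > 0`. -/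
def MemL {X : Type*} [NormedAddCommGroup X]
    (Φ : ℕ → ℝ → ℝ) (a : ℕ → ℕ → ℝ) (x : ℕ → X) : Prop :=
  (∃ C : ℝ, ∀ k, ‖x k‖ ≤ C) ∧ (∀ n, Summable fun k => |a n k| * ‖x k‖) ∧
    ∃ σ > (0 : ℝ), Summable fun n => Φ n (rowSum a x n / σ)

/-- Membership in `h_Φ^A(X)`: as `MemL` but for every `σ > 0`. -/
def MemH {X : Type*} [NormedAddCommGroup X]
    (Φ : ℕ → ℝ → ℝ) (a : ℕ → ℕ → ℝ) (x : ℕ → X) : Prop :=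
  (∃ C : ℝ, ∀ k, ‖x k‖ ≤ C) ∧ (∀ n, Summable fun k => |a n k| * ‖x k‖) ∧
    ∀ σ > (0 : ℝ), Summable fun n => Φ n (rowSum a x n / σ)

/-- The Luxemburg-type norm `‖x‖_Φ^A`. -/
noncomputable def ANorm {X : Type*} [NormedAddCommGroup X]
    (Φ : ℕ → ℝ → ℝ) (a : ℕ → ℕ → ℝ) (x : ℕ → X) : ℝ :=
  sInf {σ : ℝ | 0 < σ ∧ (Summable fun n => Φ n (rowSum a x n / σ)) ∧
    (∑' n, Φ n (rowSum a x n / σ)) ≤ 1}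

/-- The modular `ρ_Φ^A(x) = ∑_n φ_n(∑_k |a_{nk}| ‖x_k‖)`. -/
noncomputable def rhoA {X : Type*} [NormedAddCommGroup X]
    (Φ : ℕ → ℝ → ℝ) (a : ℕ → ℕ → ℝ) (x : ℕ → X) : ℝ :=
  ∑' n, Φ n (rowSum a x n)

/-- The `m`-th section of a sequence: first `m` coordinates kept, rest zero. -/
def sect {X : Type*} [Zero X] (x : ℕ → X) (m : ℕ) : ℕ → X :=
  fun k => if k < m then x k else 0

/-!
Convexity gives `φ (λ u) ≤ λ φ u` for `0 ≤ λ ≤ 1`. Hence an admissible `σ ≤ 1` for the Luxemburg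
norm bounds the modular by `σ`, so norm convergence to `0` implies modular convergence to `0`.

Conversely, δ₂ shows that if the modulars of `x⁽ˡ⁾` tend to `0`, so do those of `2 x⁽ˡ⁾`: once all
terms are below `δ`, the condition bounds the series by `K ρ(x⁽ˡ⁾)` plus a tail of `(cₙ)`, and the
finitely many remaining terms tend to `0` because each `φₙ` is continuous and vanishes only at `0`.
Iterating, the modular of `2ᵐ x⁽ˡ⁾` eventually drops below `1`, that is `‖x⁽ˡ⁾‖ ≤ 2⁻ᵐ`.
-/

section

variable {ι : Type*} {φ : ℝ → ℝ} {Φ : ℕ → ℝ → ℝ}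

namespace IsOrliczFn

theorem nonneg (hφ : IsOrliczFn φ) {t : ℝ} (ht : 0 ≤ t) : 0 ≤ φ t :=
  hφ.map_zero ▸ hφ.monotoneOn Set.self_mem_Ici ht ht

theorem mono (hφ : IsOrliczFn φ) {s t : ℝ} (hs : 0 ≤ s) (hst : s ≤ t) : φ s ≤ φ t :=
  hφ.monotoneOn hs (hs.trans hst) hst

theorem map_mul_le (hφ : IsOrliczFn φ) {l u : ℝ} (hl0 : 0 ≤ l) (hl1 : l ≤ 1) (hu : 0 ≤ u) :
    φ (l * u) ≤ l * φ u := by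
  simpa [hφ.map_zero] using
    hφ.convexOn.2 (Set.mem_Ici.2 hu) Set.self_mem_Ici hl0 (sub_nonneg.2 hl1) (add_sub_cancel l 1)

theorem tendsto_zero_of_tendsto_map (hφ : IsOrliczFn φ) {L : Filter ι} {u : ι → ℝ}
    (hu : ∀ i, 0 ≤ u i) (h : Tendsto (fun i => φ (u i)) L (𝓝 0)) : Tendsto u L (𝓝 0) := by
  refine tendsto_order.2 ⟨fun b hb => .of_forall fun i => hb.trans_le (hu i), fun s hs => ?_⟩
  filter_upwards [h.eventually (gt_mem_nhds (hφ.pos s hs))] with i hi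
  by_contra! hsi
  exact (hφ.mono hs.le hsi).not_gt hi

theorem tendsto_map_zero (hφ : IsOrliczFn φ) {L : Filter ι} {u : ι → ℝ} (hu : ∀ i, 0 ≤ u i)
    (h : Tendsto u L (𝓝 0)) : Tendsto (fun i => φ (u i)) L (𝓝 0) := by
  have := (hφ.continuousOn 0 Set.self_mem_Ici).tendsto.comp
    (tendsto_nhdsWithin_iff.2 ⟨h, .of_forall hu⟩)
  rwa [hφ.map_zero] at this

end IsOrliczFn

namespace IsMusielakOrlicz

theorem modular_mul_le (hΦ : IsMusielakOrlicz Φ) {l : ℝ} {u : ℕ → ℝ} (hl0 : 0 ≤ l) (hl1 : l ≤ 1)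
    (hu : ∀ n, 0 ≤ u n) (hs : Summable fun n => Φ n (u n)) :
    Summable (fun n => Φ n (l * u n)) ∧ ∑' n, Φ n (l * u n) ≤ l * ∑' n, Φ n (u n) := by
  have hle : ∀ n, Φ n (l * u n) ≤ l * Φ n (u n) := fun n => (hΦ n).map_mul_le hl0 hl1 (hu n)
  have hs' : Summable fun n => Φ n (l * u n) :=
    .of_nonneg_of_le (fun n => (hΦ n).nonneg (mul_nonneg hl0 (hu n))) hle (hs.mul_left l)
  exact ⟨hs', (hs'.tsum_le_tsum hle (hs.mul_left l)).trans_eq tsum_mul_left⟩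

theorem tendsto_map_two_mul_of_tendsto_modular (hΦ : IsMusielakOrlicz Φ) {L : Filter ι}
    {u : ι → ℕ → ℝ} (hu : ∀ l n, 0 ≤ u l n) (hs : ∀ l, Summable fun n => Φ n (u l n))
    (h : Tendsto (fun l => ∑' n, Φ n (u l n)) L (𝓝 0)) (i : ℕ) :
    Tendsto (fun l => Φ i (2 * u l i)) L (𝓝 0) := by
  have hterm : Tendsto (fun l => Φ i (u l i)) L (𝓝 0) :=
    squeeze_zero (fun l => (hΦ i).nonneg (hu l i))
      (fun l => (hs l).le_tsum i fun n _ => (hΦ n).nonneg (hu l n)) h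
  have harg := ((hΦ i).tendsto_zero_of_tendsto_map (fun l => hu l i) hterm).const_mul 2
  rw [mul_zero] at harg
  exact (hΦ i).tendsto_map_zero (fun l => mul_nonneg zero_le_two (hu l i)) harg

theorem tsum_two_mul_le {K δ : ℝ} {c : ℕ → ℝ} {u : ℕ → ℝ} (hΦ : IsMusielakOrlicz Φ) (hK : 0 ≤ K)
    (hc : Summable c) (hbd : ∀ n x, 0 ≤ x → Φ n x ≤ δ → Φ n (2 * x) ≤ K * Φ n x + c n)
    (hu : ∀ n, 0 ≤ u n) (hs : Summable fun n => Φ n (u n)) (hδ : ∑' n, Φ n (u n) ≤ δ) (N : ℕ) :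
    ∑' n, Φ n (2 * u n) ≤
      ∑ i ∈ Finset.range N, Φ i (2 * u i) + K * ∑' n, Φ n (u n) + ∑' n, c (n + N) := by
  have hnn : ∀ n, 0 ≤ Φ n (u n) := fun n => (hΦ n).nonneg (hu n)
  have hle : ∀ n, Φ n (2 * u n) ≤ K * Φ n (u n) + c n := fun n =>
    hbd n (u n) (hu n) ((hs.le_tsum n fun m _ => hnn m).trans hδ)
  have hsK : Summable fun n => K * Φ n (u n) + c n := (hs.mul_left K).add hc
  have hs2 : Summable fun n => Φ n (2 * u n) :=
    .of_nonneg_of_le (fun n => (hΦ n).nonneg (mul_nonneg zero_le_two (hu n))) hle hsK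
  rw [← hs2.sum_add_tsum_nat_add N, add_assoc]
  gcongr
  calc ∑' n, Φ (n + N) (2 * u (n + N))
      ≤ ∑' n, (K * Φ (n + N) (u (n + N)) + c (n + N)) :=
        ((summable_nat_add_iff N).2 hs2).tsum_le_tsum (fun n => hle (n + N))
          ((summable_nat_add_iff N).2 hsK)
    _ = K * ∑' n, Φ (n + N) (u (n + N)) + ∑' n, c (n + N) := by
        rw [Summable.tsum_add (((summable_nat_add_iff N).2 hs).mul_left K)
          ((summable_nat_add_iff N).2 hc), tsum_mul_left]
    _ ≤ K * ∑' n, Φ n (u n) + ∑' n, c (n + N) := add_le_add_left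
        (mul_le_mul_of_nonneg_left (tsum_comp_le_tsum_of_inj hs hnn (add_left_injective N)) hK) _

end IsMusielakOrlicz

namespace MOCondDelta2

theorem summable_two_mul (hδ : MOCondDelta2 Φ) (hΦ : IsMusielakOrlicz Φ) {u : ℕ → ℝ}
    (hu : ∀ n, 0 ≤ u n) (hs : Summable fun n => Φ n (u n)) :
    Summable fun n => Φ n (2 * u n) := by
  obtain ⟨K, -, δ, hδ0, c, -, hc, hbd⟩ := hδ
  obtain ⟨N, hN⟩ := eventually_atTop.1 (hs.tendsto_atTop_zero.eventually (ge_mem_nhds hδ0))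
  rw [← summable_nat_add_iff N]
  exact .of_nonneg_of_le (fun n => (hΦ _).nonneg (mul_nonneg zero_le_two (hu _)))
    (fun n => hbd _ _ (hu _) (hN _ (Nat.le_add_left N n)))
    ((summable_nat_add_iff N).2 ((hs.mul_left K).add hc))

theorem summable_mul (hδ : MOCondDelta2 Φ) (hΦ : IsMusielakOrlicz Φ) {u : ℕ → ℝ}
    (hu : ∀ n, 0 ≤ u n) (hs : Summable fun n => Φ n (u n)) {t : ℝ} (ht : 0 ≤ t) :
    Summable fun n => Φ n (t * u n) := by
  have hpow : ∀ j : ℕ, Summable fun n => Φ n (2 ^ j * u n) := by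
    intro j
    induction j with
    | zero => simpa using hs
    | succ j ih =>
      simpa only [pow_succ', mul_assoc] using
        hδ.summable_two_mul hΦ (fun n => mul_nonneg (by positivity) (hu n)) ih
  obtain ⟨j, hj⟩ := pow_unbounded_of_one_lt t one_lt_two
  exact .of_nonneg_of_le (fun n => (hΦ n).nonneg (mul_nonneg ht (hu n)))
    (fun n => (hΦ n).mono (mul_nonneg ht (hu n)) (mul_le_mul_of_nonneg_right hj.le (hu n)))
    (hpow j)

theorem tendsto_modular_two_mul (hδ : MOCondDelta2 Φ) (hΦ : IsMusielakOrlicz Φ) {L : Filter ι}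
    {u : ι → ℕ → ℝ} (hu : ∀ l n, 0 ≤ u l n) (hs : ∀ l, Summable fun n => Φ n (u l n))
    (h : Tendsto (fun l => ∑' n, Φ n (u l n)) L (𝓝 0)) :
    Tendsto (fun l => ∑' n, Φ n (2 * u l n)) L (𝓝 0) := by
  obtain ⟨K, hK, δ, hδ0, c, -, hc, hbd⟩ := hδ
  refine tendsto_order.2 ⟨fun b hb => .of_forall fun l => hb.trans_le
    (tsum_nonneg fun n => (hΦ n).nonneg (mul_nonneg zero_le_two (hu l n))), fun τ hτ => ?_⟩
  obtain ⟨N, hN⟩ :=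
    ((tendsto_sum_nat_add c).eventually (gt_mem_nhds (by positivity : 0 < τ / 3))).exists
  have hhead : Tendsto (fun l => ∑ i ∈ Finset.range N, Φ i (2 * u l i)) L (𝓝 0) := by
    simpa using tendsto_finsetSum (Finset.range N) fun i _ =>
      hΦ.tendsto_map_two_mul_of_tendsto_modular hu hs h i
  filter_upwards [hhead.eventually (gt_mem_nhds (by positivity : 0 < τ / 3)),
    h.eventually (ge_mem_nhds hδ0),
    h.eventually (gt_mem_nhds (by positivity : 0 < τ / (3 * K)))] with l hl_head hl_δ hl_K
  have hKρ : K * ∑' n, Φ n (u l n) < τ / 3 :=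
    calc K * ∑' n, Φ n (u l n) < K * (τ / (3 * K)) := by gcongr
      _ = τ / 3 := by field_simp
  linarith [hΦ.tsum_two_mul_le hK.le hc hbd (hu l) (hs l) hl_δ N]

theorem tendsto_modular_two_pow_mul (hδ : MOCondDelta2 Φ) (hΦ : IsMusielakOrlicz Φ)
    {L : Filter ι} {u : ι → ℕ → ℝ} (hu : ∀ l n, 0 ≤ u l n)
    (hs : ∀ l, Summable fun n => Φ n (u l n)) (h : Tendsto (fun l => ∑' n, Φ n (u l n)) L (𝓝 0))
    (m : ℕ) : Tendsto (fun l => ∑' n, Φ n (2 ^ m * u l n)) L (𝓝 0) := by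
  induction m with
  | zero => simpa using h
  | succ m ih =>
    simpa only [pow_succ', mul_assoc] using
      hδ.tendsto_modular_two_mul hΦ (fun l n => mul_nonneg (by positivity) (hu l n))
        (fun l => hδ.summable_mul hΦ (hu l) (hs l) (by positivity)) ih

end MOCondDelta2

section LuxemburgNorm

variable {X : Type*} [NormedAddCommGroup X] {a : ℕ → ℕ → ℝ} {x : ℕ → X}

theorem rowSum_nonneg (a : ℕ → ℕ → ℝ) (x : ℕ → X) (n : ℕ) : 0 ≤ rowSum a x n :=
  tsum_nonneg fun _ => mul_nonneg (abs_nonneg _) (norm_nonneg _)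

theorem ANorm_nonneg : 0 ≤ ANorm Φ a x :=
  Real.sInf_nonneg fun _ hσ => hσ.1.le

theorem ANorm_le {σ : ℝ} (hσ : 0 < σ) (hs : Summable fun n => Φ n (rowSum a x n / σ))
    (h1 : ∑' n, Φ n (rowSum a x n / σ) ≤ 1) : ANorm Φ a x ≤ σ :=
  csInf_le ⟨0, fun _ hτ => hτ.1.le⟩ ⟨hσ, hs, h1⟩

theorem exists_modular_div_le_one (hΦ : IsMusielakOrlicz Φ) (hx : MemL Φ a x) :
    ∃ σ, 0 < σ ∧ (Summable fun n => Φ n (rowSum a x n / σ)) ∧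
      ∑' n, Φ n (rowSum a x n / σ) ≤ 1 := by
  obtain ⟨-, -, σ₀, hσ₀, hs⟩ := hx
  set S := ∑' n, Φ n (rowSum a x n / σ₀)
  have hS : 0 ≤ S := tsum_nonneg fun n =>
    (hΦ n).nonneg (div_nonneg (rowSum_nonneg a x n) hσ₀.le)
  have hdiv : ∀ n, rowSum a x n / (σ₀ * (S + 1)) = (S + 1)⁻¹ * (rowSum a x n / σ₀) := fun n => by
    field_simp
  obtain ⟨hs', hle⟩ := hΦ.modular_mul_le (l := (S + 1)⁻¹) (inv_nonneg.2 (by linarith))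
    (inv_le_one_of_one_le₀ (by linarith)) (fun n => div_nonneg (rowSum_nonneg a x n) hσ₀.le) hs
  refine ⟨σ₀ * (S + 1), by positivity, by simpa only [hdiv] using hs', ?_⟩
  simp only [hdiv]
  refine hle.trans ?_
  rw [inv_mul_le_iff₀ (by linarith)]
  linarith

theorem rhoA_le_ANorm (hΦ : IsMusielakOrlicz Φ) (hx : MemL Φ a x) (h : ANorm Φ a x < 1) :
    rhoA Φ a x ≤ ANorm Φ a x := by
  refine le_of_forall_gt fun ε hε => ?_
  obtain ⟨σ, ⟨hσ, hs, h1⟩, hσε⟩ :=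
    exists_lt_of_csInf_lt (exists_modular_div_le_one hΦ hx) (lt_min hε h)
  obtain ⟨-, hle⟩ := hΦ.modular_mul_le hσ.le (hσε.trans_le (min_le_right ε 1)).le
    (fun n => div_nonneg (rowSum_nonneg a x n) hσ.le) hs
  simp only [mul_div_cancel₀ _ hσ.ne'] at hle
  calc rhoA Φ a x ≤ σ * 1 := hle.trans (mul_le_mul_of_nonneg_left h1 hσ.le)
    _ < ε := by linarith [min_le_left ε 1]

theorem tendsto_rhoA_zero_of_tendsto_ANorm_zero (hΦ : IsMusielakOrlicz Φ) {L : Filter ι}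
    {f : ι → ℕ → X} (hf : ∀ l, MemL Φ a (f l)) (h : Tendsto (fun l => ANorm Φ a (f l)) L (𝓝 0)) :
    Tendsto (fun l => rhoA Φ a (f l)) L (𝓝 0) :=
  squeeze_zero' (.of_forall fun l => tsum_nonneg fun n => (hΦ n).nonneg (rowSum_nonneg a (f l) n))
    ((h.eventually (gt_mem_nhds one_pos)).mono fun l hl => rhoA_le_ANorm hΦ (hf l) hl) h

theorem tendsto_ANorm_zero_of_tendsto_rhoA_zero (hΦ : IsMusielakOrlicz Φ) (hδ : MOCondDelta2 Φ)
    {L : Filter ι} {f : ι → ℕ → X} (hf : ∀ l, MemL Φ a (f l))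
    (h : Tendsto (fun l => rhoA Φ a (f l)) L (𝓝 0)) :
    Tendsto (fun l => ANorm Φ a (f l)) L (𝓝 0) := by
  have hR : ∀ l n, 0 ≤ rowSum a (f l) n := fun l => rowSum_nonneg a (f l)
  have hs : ∀ l, Summable fun n => Φ n (rowSum a (f l) n) := fun l => by
    obtain ⟨-, -, σ, hσ, hsσ⟩ := hf l
    simpa only [mul_div_cancel₀ _ hσ.ne'] using
      hδ.summable_mul hΦ (fun n => div_nonneg (hR l n) hσ.le) hsσ hσ.le
  refine tendsto_order.2 ⟨fun b hb => .of_forall fun l => hb.trans_le ANorm_nonneg, fun ε hε => ?_⟩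
  obtain ⟨m, hm⟩ := exists_pow_lt_of_lt_one hε (by norm_num : (2⁻¹ : ℝ) < 1)
  have hdiv : ∀ l n, rowSum a (f l) n / 2⁻¹ ^ m = 2 ^ m * rowSum a (f l) n := fun l n => by
    rw [inv_pow, div_inv_eq_mul, mul_comm]
  filter_upwards [(hδ.tendsto_modular_two_pow_mul hΦ hR hs h m).eventually (ge_mem_nhds one_pos)]
    with l hl
  refine (ANorm_le (by positivity) ?_ ?_).trans_lt hm
  · simpa only [hdiv] using hδ.summable_mul hΦ (hR l) (hs l) (by positivity)
  · simpa only [hdiv] using hl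

end LuxemburgNorm

end

theorem norm_tendsto_zero_iff_modular_tendsto_zero_general
    {X : Type*} [NormedAddCommGroup X]
    (Φ : ℕ → ℝ → ℝ) (hΦ : IsMusielakOrlicz Φ) (hδ : MOCondDelta2 Φ)
    (a : ℕ → ℕ → ℝ) :
    ∀ f : ℕ → ℕ → X, (∀ l, MemL Φ a (f l)) →
      (Tendsto (fun l => ANorm Φ a (f l)) atTop (𝓝 0) ↔
        Tendsto (fun l => rhoA Φ a (f l)) atTop (𝓝 0)) := fun _ hf =>
  ⟨tendsto_rhoA_zero_of_tendsto_ANorm_zero hΦ hf, tendsto_ANorm_zero_of_tendsto_rhoA_zero hΦ hδ hf⟩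

/-- for `A ∈ 𝒜` and `Φ ∈ δ₂`, for sequences in `l_Φ^A(X)`,
norm convergence to `0` is equivalent to modular convergence to `0`. -/
theorem norm_tendsto_zero_iff_modular_tendsto_zero
    {X : Type*} [NormedAddCommGroup X] [NormedSpace ℝ X] [CompleteSpace X]
    (Φ : ℕ → ℝ → ℝ) (hΦ : IsMusielakOrlicz Φ) (hδ : MOCondDelta2 Φ)
    (a : ℕ → ℕ → ℝ) (hA : MatrixClassA a) :
    ∀ f : ℕ → ℕ → X, (∀ l, MemL Φ a (f l)) →
      (Tendsto (fun l => ANorm Φ a (f l)) atTop (𝓝 0) ↔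
        Tendsto (fun l => rhoA Φ a (f l)) atTop (𝓝 0)) :=
  norm_tendsto_zero_iff_modular_tendsto_zero_general Φ hΦ hδ a
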